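/- Let M be an N×N matrix over a field and α ≠ β indices. Define the (α,β)-cofactor (1_N + M)_{α̂β̂} = (-1)^{α+β} det of the matrix obtained from 1_N + M by deleting row α and column β. Then (1_N + M)_{α̂β̂} = -Σ_{k=1}^{N-1} (1/(k-1)!) Σ_{ν_1,...,ν_{k-1}} det of the k×k matrix whose first column is (M_{βα}, M_{βν_1}, ..., M_{βν_{k-1}})^T in the sense that its (i,j) entries are: first row (M_{βα}, M_{ν_1 α}, ..., M_{ν_{k-1} α}), and row i+1 is (M_{β ν_i}, M_{ν_1 ν_i}, ..., M_{ν_{k-1} ν_i}). -/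

import Mathlib

/-!
By `adjugate_apply`, the cofactor is the determinant of `1 + M` with row `α` replaced by `e_β`.
Split every row of that matrix as (row of `M`, zero at `α`) + (`e_β` at `α`, `e_i` at `i ≠ α`) and
expand multilinearly. A term survives only if the set `T` of rows taken from `M` contains `β` but
not `α`, say `T = insert β V`; swapping columns `α` and `β` turns all other rows into standard
basis rows, so the term is minus the bordered minor of `M` with rows `(β, V)` and columns `(α, V)`.
On the other side, a tuple `ν` of length `m` gives zero unless it is injective, and each `m`-set
`V` is the image of exactly `m!` injective tuples.
-/

open Finset Matrix Function
open scoped Nat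

section Tuples

variable {ι R : Type*} [Fintype ι] [DecidableEq ι] [AddCommMonoid R]

theorem Finset.card_filter_injective_image_eq {m : ℕ} {V : Finset ι} (hV : #V = m) :
    #{ν : Fin m → ι | Injective ν ∧ univ.image ν = V} = m ! := by
  have hfiber : ∀ ν : Fin m → ι,
      (Injective ν ∧ univ.image ν = V) ↔ (Injective ν ∧ ∀ i, ν i ∈ V) := by
    refine fun ν => and_congr_right fun hν => ⟨fun h i => h ▸ mem_image_of_mem ν (mem_univ i),
      fun h => eq_of_subset_of_card_le (fun x hx => ?_) ?_⟩
    · obtain ⟨i, -, rfl⟩ := mem_image.mp hx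
      exact h i
    · rw [card_image_of_injective _ hν, card_univ, Fintype.card_fin, hV]
  let e : {ν : Fin m → ι // Injective ν ∧ ∀ i, ν i ∈ V} ≃ (Fin m ↪ V) :=
    { toFun := fun ν => ⟨fun i => ⟨ν.1 i, ν.2.2 i⟩, fun i j h => ν.2.1 (congrArg Subtype.val h)⟩
      invFun := fun f => ⟨fun i => f i, fun i j h => f.injective (Subtype.ext h), fun i => (f i).2⟩
      left_inv := fun _ => rfl
      right_inv := fun _ => rfl }
  rw [filter_congr fun ν _ => hfiber ν, ← Fintype.card_subtype, Fintype.card_congr e,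
    Fintype.card_embedding_eq, Fintype.card_coe, Fintype.card_fin, hV, Nat.descFactorial_self]

theorem Finset.sum_fin_tuples_eq_factorial_smul_sum_powersetCard {m : ℕ} (F : (Fin m → ι) → R)
    (G : Finset ι → R) (hF : ∀ ν, ¬Injective ν → F ν = 0)
    (hFG : ∀ ν, Injective ν → F ν = G (univ.image ν)) :
    ∑ ν, F ν = m ! • ∑ V ∈ powersetCard m univ, G V := by
  have hmaps : ∀ ν ∈ ({ν | Injective ν} : Finset (Fin m → ι)),
      univ.image ν ∈ powersetCard m (univ : Finset ι) := fun ν hν => by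
    rw [mem_powersetCard, card_image_of_injective _ (mem_filter.mp hν).2]
    simp
  calc ∑ ν, F ν = ∑ ν : Fin m → ι with Injective ν, G (univ.image ν) := by
        simp only [sum_filter]
        exact sum_congr rfl fun ν _ => by split_ifs with h; exacts [hFG ν h, hF ν h]
    _ = ∑ V ∈ powersetCard m univ, #{ν : Fin m → ι | Injective ν ∧ univ.image ν = V} • G V := by
        rw [← sum_fiberwise_of_maps_to' hmaps]
        refine sum_congr rfl fun V _ => ?_
        rw [sum_const, filter_filter]
    _ = m ! • ∑ V ∈ powersetCard m univ, G V := by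
        rw [smul_sum]
        exact sum_congr rfl fun V hV => by
          rw [card_filter_injective_image_eq (mem_powersetCard.mp hV).2]

end Tuples

theorem Matrix.det_eq_det_submatrix_of_row_eq_single {ι κ R : Type*} [Fintype ι] [DecidableEq ι]
    [Fintype κ] [DecidableEq κ] [CommRing R] (A : Matrix ι ι R) (r : κ → ι) (hr : Injective r)
    (hA : ∀ i ∉ Set.range r, A i = Pi.single i 1) :
    A.det = (A.submatrix r r).det := by
  classical
  have hblock : ∀ i, i ∉ Set.range r → ∀ j ∈ Set.range r, A i j = 0 := fun i hi j hj => by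
    rw [hA i hi, Pi.single_apply, if_neg (ne_of_mem_of_not_mem hj hi)]
  have hone : toSquareBlockProp A (· ∉ Set.range r) = 1 := by
    ext i j
    simp only [toSquareBlockProp_def, of_apply, hA i i.2, Pi.single_apply, one_apply,
      Subtype.ext_iff, eq_comm]
  rw [twoBlockTriangular_det A (· ∈ Set.range r) hblock, hone, det_one, mul_one]
  convert (det_submatrix_equiv_self (Equiv.ofInjective r hr) _).symm
  rfl

theorem Finset.notMem_of_mem_powerset_compl {ι : Type*} [Fintype ι] [DecidableEq ι]
    {s V : Finset ι} {a : ι} (hV : V ∈ sᶜ.powerset) (ha : a ∈ s) : a ∉ V :=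
  fun h => mem_compl.mp (mem_powerset.mp hV h) ha

theorem Finset.sum_finsets_eq_sum_powerset_compl_insert {ι M : Type*} [Fintype ι] [DecidableEq ι]
    [AddCommMonoid M] {α β : ι} (hαβ : α ≠ β) (F : Finset ι → M)
    (hα : ∀ T, α ∈ T → F T = 0) (hβ : ∀ T, α ∉ T → β ∉ T → F T = 0) :
    ∑ T, F T = ∑ V ∈ ({α, β}ᶜ : Finset ι).powerset, F (insert β V) := by
  set U : Finset ι := {α, β}ᶜ
  have hαU : α ∉ insert β U := by simp [U, hαβ]
  have hβU : β ∉ U := by simp [U]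
  have huniv : (univ : Finset ι) = insert α (insert β U) := by
    ext i; simp only [U, mem_univ, mem_insert, mem_compl, mem_singleton, true_iff]; tauto
  rw [← powerset_univ, huniv, sum_powerset_insert hαU, sum_powerset_insert hβU,
    sum_eq_zero fun T hT => hβ T (notMem_of_mem_powerset_compl hT (by simp))
      (notMem_of_mem_powerset_compl hT (by simp)),
    sum_eq_zero fun T _ => hα _ (mem_insert_self α T), zero_add, add_zero]

section BorderedMinor

variable {ι R : Type*} [DecidableEq ι] [CommRing R] (M : Matrix ι ι R) (α β : ι)

/-- Rows `β, V` and columns `α, V`, indexed by `Option V` so that row `β` meets column `α`.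
For `V = {ν₁, …, ν_{k-1}}` this is the determinant of the paper's `k × k` bordered matrix, which is
the transpose of this one up to a simultaneous reordering of rows and columns. -/
def borderedMinor (V : Finset ι) : R :=
  (M.submatrix (Option.elim' β Subtype.val) (Option.elim' α Subtype.val) :
    Matrix (Option V) (Option V) R).det

theorem borderedMinor_eq_zero_of_left_mem {V : Finset ι} (hα : α ∈ V) :
    borderedMinor M α β V = 0 :=
  det_zero_of_column_eq (i := none) (j := some ⟨α, hα⟩) (by simp) fun _ => rfl

theorem borderedMinor_eq_zero_of_right_mem {V : Finset ι} (hβ : β ∈ V) :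
    borderedMinor M α β V = 0 :=
  det_zero_of_row_eq (i := none) (j := some ⟨β, hβ⟩) (by simp) rfl

theorem det_submatrix_cons_eq_borderedMinor {m : ℕ} {ν : Fin m → ι} (hν : Injective ν) :
    (M.submatrix (Fin.cons β ν) (Fin.cons α ν)).det = borderedMinor M α β (univ.image ν) := by
  let e : Fin m ≃ univ.image ν :=
    Equiv.ofBijective (fun i => ⟨ν i, mem_image_of_mem ν (mem_univ i)⟩)
      ⟨fun i j h => hν (congrArg Subtype.val h), fun ⟨x, hx⟩ => by
        obtain ⟨i, -, rfl⟩ := mem_image.mp hx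
        exact ⟨i, rfl⟩⟩
  rw [borderedMinor, ← det_submatrix_equiv_self ((finSuccEquiv m).trans e.optionCongr),
    submatrix_submatrix]
  congr 2 <;> ext i <;> cases i using Fin.cases <;> rfl

omit [DecidableEq ι] in
theorem det_submatrix_cons_eq_zero {m : ℕ} {ν : Fin m → ι} (hν : ¬Injective ν) :
    (M.submatrix (Fin.cons β ν) (Fin.cons α ν)).det = 0 := by
  obtain ⟨i, j, hij, hne⟩ := not_injective_iff.mp hν
  exact det_zero_of_row_eq (i := i.succ) (j := j.succ) (by simpa using hne)
    (funext fun k => by simp [hij])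

variable [Fintype ι]

theorem sum_det_submatrix_cons (m : ℕ) :
    ∑ ν : Fin m → ι, (M.submatrix (Fin.cons β ν) (Fin.cons α ν)).det
      = m ! • ∑ V ∈ powersetCard m ({α, β}ᶜ : Finset ι), borderedMinor M α β V := by
  rw [sum_fin_tuples_eq_factorial_smul_sum_powersetCard _ (borderedMinor M α β)
    (fun _ => det_submatrix_cons_eq_zero M α β) (fun _ => det_submatrix_cons_eq_borderedMinor M α β)]
  refine congrArg _ (sum_subset (powersetCard_mono (subset_univ _)) fun V hV hVU => ?_).symm
  obtain ⟨x, hxV, hx⟩ := not_subset.mp fun h =>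
    hVU (mem_powersetCard.mpr ⟨h, (mem_powersetCard.mp hV).2⟩)
  rcases (by simpa [or_iff_not_imp_left] using hx : x = α ∨ x = β) with rfl | rfl
  exacts [borderedMinor_eq_zero_of_left_mem M x β hxV, borderedMinor_eq_zero_of_right_mem M α x hxV]

variable {α β}

theorem det_eq_neg_borderedMinor (hαβ : α ≠ β) {V : Finset ι} (hαV : α ∉ V) (hβV : β ∉ V)
    (D : Matrix ι ι R) (hDM : ∀ i ∈ insert β V, D i = M i)
    (hDsingle : ∀ i ∉ insert β V, D i = Pi.single (Equiv.swap α β i) 1) :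
    D.det = -borderedMinor M α β V := by
  let r : Option V → ι := Option.elim' β Subtype.val
  have hr : Injective r := by
    rintro (_ | ⟨a, ha⟩) (_ | ⟨b, hb⟩) h <;> simp only [r, Option.elim'] at h
    exacts [rfl, absurd (h ▸ hb) hβV, absurd (h ▸ ha) hβV, by simp [h]]
  have hrange : ∀ i, i ∈ Set.range r ↔ i ∈ insert β V := fun i => by
    simp [r, Option.exists, eq_comm]
  have hswap : ∀ o, Equiv.swap α β (r o) = Option.elim' α Subtype.val o := by
    rintro (_ | ⟨b, hb⟩)
    · exact Equiv.swap_apply_right α β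
    · exact Equiv.swap_apply_of_ne_of_ne (ne_of_mem_of_not_mem hb hαV) (ne_of_mem_of_not_mem hb hβV)
  have hsingle : ∀ i ∉ Set.range r, D.submatrix id (Equiv.swap α β) i = Pi.single i 1 :=
    fun i hi => funext fun j => by
      rw [submatrix_apply, id, hDsingle i (mt (hrange i).mpr hi)]
      simp only [Pi.single_apply, (Equiv.swap α β).apply_eq_iff_eq]
  have hminor : (D.submatrix id (Equiv.swap α β)).submatrix r r
      = M.submatrix (Option.elim' β Subtype.val) (Option.elim' α Subtype.val) := by
    ext o o'
    rw [submatrix_apply, submatrix_apply, id, hDM _ ((hrange _).mp ⟨o, rfl⟩), hswap]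
    rfl
  rw [borderedMinor, ← hminor, ← det_eq_det_submatrix_of_row_eq_single _ r hr hsingle,
    det_permute', Equiv.Perm.sign_swap hαβ]
  simp

theorem det_updateRow_one_add_eq_neg_sum_borderedMinor (hαβ : α ≠ β) :
    ((1 + M).updateRow α (Pi.single β 1)).det
      = -∑ V ∈ ({α, β}ᶜ : Finset ι).powerset, borderedMinor M α β V := by
  set U : Finset ι := {α, β}ᶜ
  let P : ι → ι → R := fun i => Pi.single (if i = α then β else i) 1
  let Q : ι → ι → R := fun i => if i = α then 0 else M i
  have hQP : (1 + M).updateRow α (Pi.single β 1) = of (Q + P) := by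
    ext i j
    by_cases hi : i = α
    · simp [hi, P, Q]
    · simp [hi, P, Q, one_eq_pi_single, add_comm]
  have hexpand : (of (Q + P)).det = ∑ T : Finset ι, (of (T.piecewise Q P)).det :=
    (detRowAlternating : (ι → R) [⋀^ι]→ₗ[R] R).map_add_univ Q P
  have hrow_α : ∀ T : Finset ι, α ∈ T → (of (T.piecewise Q P)).det = 0 := fun T hT =>
    det_eq_zero_of_row_eq_zero α fun j => by simp [piecewise_eq_of_mem _ _ _ hT, Q]
  have hrow_β : ∀ T : Finset ι, α ∉ T → β ∉ T → (of (T.piecewise Q P)).det = 0 := fun T hα hβ =>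
    det_zero_of_row_eq hαβ <| by
      change T.piecewise Q P α = T.piecewise Q P β
      simp [piecewise_eq_of_notMem _ _ _ hα, piecewise_eq_of_notMem _ _ _ hβ, P, hαβ.symm]
  have hQ : ∀ i ≠ α, Q i = M i := fun i hi => if_neg hi
  have hP : ∀ i ≠ β, P i = Pi.single (Equiv.swap α β i) 1 := fun i hi => by
    by_cases hiα : i = α
    · simp only [P, hiα, if_true, Equiv.swap_apply_left]
    · simp only [P, if_neg hiα, Equiv.swap_apply_of_ne_of_ne hiα hi]
  have hU : ∀ V ∈ U.powerset, α ∉ V ∧ β ∉ V := fun V hV =>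
    ⟨notMem_of_mem_powerset_compl hV (by simp), notMem_of_mem_powerset_compl hV (by simp)⟩
  rw [hQP, hexpand, sum_finsets_eq_sum_powerset_compl_insert hαβ _ hrow_α hrow_β,
    ← sum_neg_distrib]
  refine sum_congr rfl fun V hV => det_eq_neg_borderedMinor M hαβ (hU V hV).1 (hU V hV).2 _
    (fun i hi => ?_) (fun i hi => ?_)
  · change (insert β V).piecewise Q P i = M i
    rw [piecewise_eq_of_mem _ _ _ hi, hQ i (ne_of_mem_of_not_mem hi (by simpa [hαβ] using (hU V hV).1))]
  · change (insert β V).piecewise Q P i = _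
    rw [piecewise_eq_of_notMem _ _ _ hi, hP i fun h => hi (h ▸ mem_insert_self β V)]

end BorderedMinor

/-- Off-diagonal cofactor expansion (Lemma of Section 7.3). For an
`(n+1) × (n+1)` matrix `M` over a field of characteristic zero and indices
`α ≠ β`, the `(α,β)`-cofactor of `1 + M`, i.e.
`(-1)^{α+β} det((1+M) with row α and column β deleted)`, equals
`-∑_{k=1}^{n} (1/(k-1)!) ∑_{ν₁,…,ν_{k-1}} det C`, where `C` is the `k × k`
bordered matrix with entries `C_{ij} = M_{r(j) c(i)}`, `r = (β, ν₁, …, ν_{k-1})`,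
`c = (α, ν₁, …, ν_{k-1})` (below the summation index `m = k - 1`). -/
theorem stmt6 (n : ℕ) (K : Type*) [Field K] [CharZero K]
    (M : Matrix (Fin (n + 1)) (Fin (n + 1)) K)
    (α β : Fin (n + 1)) (hab : α ≠ β) :
    (-1 : K) ^ ((α : ℕ) + (β : ℕ)) *
        ((1 + M).submatrix α.succAbove β.succAbove).det
      = -∑ m ∈ Finset.range n, (m.factorial : K)⁻¹ *
          ∑ ν : Fin m → Fin (n + 1),
            (Matrix.of fun i j : Fin (m + 1) =>
              M ((Fin.cons β ν : Fin (m+1) → Fin (n+1)) j) ((Fin.cons α ν : Fin (m+1) → Fin (n+1)) i)).det := by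
  have hcard : #({α, β}ᶜ : Finset (Fin (n + 1))) + 1 = n := by
    have := card_le_univ ({α, β} : Finset (Fin (n + 1)))
    rw [card_pair hab, Fintype.card_fin] at this
    rw [card_compl, card_pair hab, Fintype.card_fin]
    omega
  rw [← adjugate_fin_succ_eq_det_submatrix, adjugate_apply,
    det_updateRow_one_add_eq_neg_sum_borderedMinor M hab, sum_powerset, hcard]
  refine congrArg _ (sum_congr rfl fun m _ => ?_)
  have htranspose : ∀ ν : Fin m → Fin (n + 1),
      (of fun i j : Fin (m + 1) => M ((Fin.cons β ν : Fin (m+1) → Fin (n+1)) j)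
        ((Fin.cons α ν : Fin (m+1) → Fin (n+1)) i)).det
        = (M.submatrix (Fin.cons β ν) (Fin.cons α ν)).det :=
    fun ν => det_transpose (M.submatrix (Fin.cons β ν) (Fin.cons α ν))
  rw [sum_congr rfl fun ν _ => htranspose ν, sum_det_submatrix_cons, nsmul_eq_mul, ← mul_assoc,
    inv_mul_cancel₀ (Nat.cast_ne_zero.mpr m.factorial_ne_zero), one_mul]
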